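/- arXiv:0909.1344 — 3 statements merged into one kernel-verified Lean document; each statement's English description precedes it below -/
import Mathlib

section
/- Parametrization of rank-one zero-forcing transmit covariances: Let H = [h_1, …, h_K] ∈ ℂ^{M×K} have rank K (so K ≤ M). Let g_k be the k-th column of H^+ = H (H^H H)^{-1}, normalized to unit norm, let U^⊥ ∈ ℂ^{M×(M−K)} be any matrix with orthonormal columns spanning the orthogonal complement of the column span of H, and let U_k = [g_k | U^⊥] ∈ ℂ^{M×(M−K+1)}. If T ∈ ℂ^{M×M} is Hermitian positive semidefinite of rank 1 and satisfies h_j^H T h_j = 0 for all j ≠ k, then there exists a vector a ∈ ℂ^{M−K+1} such that T = U_k a a^H U_k^H; moreover h_k^H T h_k = |g_k^H h_k|² · |a_1|², where a_1 is the first component of a. -/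
/-!
A positive semidefinite matrix of rank one is `v vᴴ`. The zero-forcing constraints say
`h_jᴴ v = 0` for `j ≠ k`. The columns `p_j` of `H (Hᴴ H)⁻¹` are biorthogonal to the `h_j`, so
`v - (h_kᴴ v) p_k` is orthogonal to every `h_j`, hence of the form `U^⊥ b`. Writing
`g_k = p_k / s` with `s = ‖p_k‖`, this gives `v = U_k a` with `a = (s h_kᴴ v, b)`, and
`h_kᴴ T h_k = |h_kᴴ v|² = |g_kᴴ h_k|² |a_1|²` since `g_kᴴ h_k = 1 / s`.
-/

open Matrix BigOperators
open scoped ComplexOrder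

/-- The `k`-th column of the Moore–Penrose pseudoinverse `H⁺ = H (Hᴴ H)⁻¹`,
normalized to unit (Euclidean) norm. -/
noncomputable def normalizedPinvCol (M K : ℕ) (H : Matrix (Fin M) (Fin K) ℂ)
    (k : Fin K) : Fin M → ℂ :=
  ((Real.sqrt ((star (fun i => (H * (Hᴴ * H)⁻¹) i k) ⬝ᵥ
      (fun i => (H * (Hᴴ * H)⁻¹) i k)).re) : ℂ))⁻¹ •
    (fun i => (H * (Hᴴ * H)⁻¹) i k)

/-- The matrix `U_k = [g_k | U^⊥]`, whose first column is the normalized `k`-th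
pseudoinverse column `g_k` and whose remaining columns are those of `U^⊥`. -/
noncomputable def zfBasisMatrix (M K : ℕ) (H : Matrix (Fin M) (Fin K) ℂ)
    (Uperp : Matrix (Fin M) (Fin (M - K)) ℂ) (k : Fin K) :
    Matrix (Fin M) (Fin (M - K + 1)) ℂ :=
  Matrix.of fun i j =>
    (Fin.cons (normalizedPinvCol M K H k)
      (fun j' : Fin (M - K) => fun i' => Uperp i' j') :
        Fin (M - K + 1) → (Fin M → ℂ)) j i

namespace Matrix

theorem exists_eq_vecMulVec_of_rank_eq_one {R m n : Type*} [Field R] [Fintype n]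
    {A : Matrix m n R} (h : A.rank = 1) : ∃ (w : m → R) (u : n → R), A = vecMulVec w u := by
  rw [rank_eq_finrank_span_cols, finrank_eq_one_iff'] at h
  obtain ⟨⟨w, _⟩, -, hspan⟩ := h
  have hcol (j : n) : ∃ c : R, c • w = A.col j := by
    obtain ⟨c, hc⟩ := hspan ⟨A.col j, Submodule.subset_span ⟨j, rfl⟩⟩
    exact ⟨c, congrArg Subtype.val hc⟩
  choose u hu using hcol
  refine ⟨w, u, Matrix.ext fun i j => ?_⟩
  rw [vecMulVec_apply, mul_comm, ← smul_eq_mul, ← Pi.smul_apply, hu j, col_apply]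

section StarRing

variable {R m n : Type*} [CommRing R] [StarRing R] [Fintype n]

theorem star_dotProduct_vecMulVec_star_mulVec (v x : n → R) :
    star x ⬝ᵥ (vecMulVec v (star v) *ᵥ x) = star (star x ⬝ᵥ v) * (star x ⬝ᵥ v) := by
  rw [vecMulVec_mulVec, op_smul_eq_smul, dotProduct_smul, smul_eq_mul, ← star_dotProduct]

theorem vecMulVec_mulVec_star (A : Matrix m n R) (a : n → R) :
    vecMulVec (A *ᵥ a) (star (A *ᵥ a)) = A * vecMulVec a (star a) * Aᴴ := by
  rw [mul_vecMulVec, vecMulVec_mul, star_mulVec]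

end StarRing

theorem isUnit_of_rank_eq_card {K n : Type*} [Field K] [Fintype n] [DecidableEq n]
    {A : Matrix n n K} (h : A.rank = Fintype.card n) : IsUnit A := by
  rw [← mulVec_injective_iff_isUnit]
  have hrange : LinearMap.range A.mulVecLin = ⊤ :=
    Submodule.eq_top_of_finrank_eq (by rwa [Module.finrank_fintype_fun_eq_card])
  exact LinearMap.injective_iff_surjective.mpr (LinearMap.range_eq_top.mp hrange)

section RCLike

variable {𝕜 n : Type*} [RCLike 𝕜]

theorem IsHermitian.vecMulVec_eq_smul {w u : n → 𝕜} (hT : (vecMulVec w u).IsHermitian)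
    {i : n} (hi : w i ≠ 0) : vecMulVec w u = (star (u i) / w i) • vecMulVec w (star w) := by
  ext j l
  have h := congrFun₂ hT i l
  simp only [conjTranspose_vecMulVec, vecMulVec_apply] at h
  simp only [smul_apply, vecMulVec_apply, smul_eq_mul, Pi.star_apply]
  field_simp
  linear_combination -w j * h

theorem PosSemidef.exists_eq_vecMulVec_star_of_rank_eq_one [Fintype n] {T : Matrix n n 𝕜}
    (hT : T.PosSemidef) (h : T.rank = 1) : ∃ v : n → 𝕜, T = vecMulVec v (star v) := by
  obtain ⟨w, u, rfl⟩ := exists_eq_vecMulVec_of_rank_eq_one h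
  obtain ⟨i, hi⟩ : ∃ i, w i ≠ 0 := by
    by_contra! hw
    simp [show w = 0 from funext hw, rank_zero] at h
  have hsmul := hT.isHermitian.vecMulVec_eq_smul hi
  have hc : 0 ≤ star (u i) / w i := by
    have hdiag := hT.diag_nonneg (i := i)
    rw [hsmul, smul_apply, vecMulVec_apply, Pi.star_apply, RCLike.star_def, RCLike.mul_conj,
      smul_eq_mul] at hdiag
    have hw : (0 : 𝕜) < (‖w i‖ : 𝕜) ^ 2 := by
      rw [← RCLike.ofReal_pow, RCLike.ofReal_pos]; positivity
    simpa [hw.ne', RCLike.star_def] using mul_nonneg hdiag (inv_nonneg.mpr hw.le)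
  obtain ⟨r, hr, hrc⟩ := RCLike.nonneg_iff_exists_ofReal.mp hc
  refine ⟨((Real.sqrt r : ℝ) : 𝕜) • w, ?_⟩
  rw [hsmul, ← hrc, star_smul, vecMulVec_smul, smul_vecMulVec, smul_smul, RCLike.star_def,
    RCLike.conj_ofReal, ← RCLike.ofReal_mul, Real.mul_self_sqrt hr]

end RCLike

end Matrix

section PseudoInverse

variable {𝕜 m n : Type*} [RCLike 𝕜] [Fintype m] [Fintype n] [DecidableEq n]

theorem isUnit_conjTranspose_mul_self_of_rank_eq {H : Matrix m n 𝕜}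
    (h : H.rank = Fintype.card n) : IsUnit (Hᴴ * H) :=
  isUnit_of_rank_eq_card (by rw [rank_conjTranspose_mul_self, h])

noncomputable def pinvCol (H : Matrix m n 𝕜) (k : n) : m → 𝕜 :=
  (H * (Hᴴ * H)⁻¹).col k

variable {H : Matrix m n 𝕜}

theorem star_col_dotProduct_pinvCol (hH : IsUnit (Hᴴ * H)) (j k : n) :
    star (H.col j) ⬝ᵥ pinvCol H k = if j = k then 1 else 0 := by
  have hleft : Hᴴ * (H * (Hᴴ * H)⁻¹) = 1 := by
    rw [← Matrix.mul_assoc, mul_nonsing_inv _ ((isUnit_iff_isUnit_det _).mp hH)]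
  rw [← one_apply, ← hleft, mul_apply']
  rfl

theorem pinvCol_ne_zero (hH : IsUnit (Hᴴ * H)) (k : n) : pinvCol H k ≠ 0 := by
  intro h
  simpa [h] using star_col_dotProduct_pinvCol hH k k

theorem star_smul_pinvCol_dotProduct_col (hH : IsUnit (Hᴴ * H)) (a : 𝕜) (k : n) :
    star (a • pinvCol H k) ⬝ᵥ H.col k = star a := by
  rw [star_smul, smul_dotProduct, star_dotProduct, star_col_dotProduct_pinvCol hH, if_pos rfl,
    star_one, smul_eq_mul, mul_one]

theorem star_col_dotProduct_sub_smul_pinvCol (hH : IsUnit (Hᴴ * H)) {k : n} {v : m → 𝕜}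
    (hv : ∀ j ≠ k, star (H.col j) ⬝ᵥ v = 0) (j : n) :
    star (H.col j) ⬝ᵥ (v - (star (H.col k) ⬝ᵥ v) • pinvCol H k) = 0 := by
  rw [dotProduct_sub, dotProduct_smul, star_col_dotProduct_pinvCol hH, smul_eq_mul]
  split_ifs with hjk
  · rw [hjk, mul_one, sub_self]
  · rw [hv j hjk, mul_zero, sub_zero]

end PseudoInverse

section ZeroForcing

variable {M K : ℕ} {H : Matrix (Fin M) (Fin K) ℂ}

theorem exists_normalizedPinvCol_eq_inv_smul (hH : IsUnit (Hᴴ * H)) (k : Fin K) :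
    ∃ s : ℂ, s ≠ 0 ∧ normalizedPinvCol M K H k = s⁻¹ • pinvCol H k := by
  refine ⟨(Real.sqrt (star (pinvCol H k) ⬝ᵥ pinvCol H k).re : ℂ), ?_, rfl⟩
  have hpos := dotProduct_star_self_pos_iff.mpr (pinvCol_ne_zero hH k)
  exact Complex.ofReal_ne_zero.mpr (Real.sqrt_pos.mpr (Complex.pos_iff.mp hpos).1).ne'

theorem zfBasisMatrix_mulVec_cons (Uperp : Matrix (Fin M) (Fin (M - K)) ℂ) (k : Fin K) (x : ℂ)
    (b : Fin (M - K) → ℂ) :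
    zfBasisMatrix M K H Uperp k *ᵥ Fin.cons x b = x • normalizedPinvCol M K H k + Uperp *ᵥ b := by
  ext i
  simp [zfBasisMatrix, mulVec, dotProduct, Fin.sum_univ_succ, mul_comm]

end ZeroForcing

theorem rank_one_zero_forcing_covariance_parametrization_general
    (M K : ℕ)
    (H : Matrix (Fin M) (Fin K) ℂ) (hrank : H.rank = K)
    (Uperp : Matrix (Fin M) (Fin (M - K)) ℂ)
    (hUspan : (↑(Submodule.span ℂ
        (Set.range (fun j : Fin (M - K) => fun i => Uperp i j))) : Set (Fin M → ℂ)) =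
      {v | ∀ j : Fin K, star (fun i => H i j) ⬝ᵥ v = 0})
    (k : Fin K)
    (T : Matrix (Fin M) (Fin M) ℂ) (hT : T.PosSemidef) (hTrank : T.rank = 1)
    (hZF : ∀ j : Fin K, j ≠ k →
      star (fun i => H i j) ⬝ᵥ (T *ᵥ (fun i => H i j)) = 0) :
    ∃ a : Fin (M - K + 1) → ℂ,
      T = zfBasisMatrix M K H Uperp k * vecMulVec a (star a) *
          (zfBasisMatrix M K H Uperp k)ᴴ ∧
      star (fun i => H i k) ⬝ᵥ (T *ᵥ (fun i => H i k)) =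
        ((Complex.normSq (star (normalizedPinvCol M K H k) ⬝ᵥ (fun i => H i k)) *
            Complex.normSq (a 0) : ℝ) : ℂ) := by
  simp only [← col_apply] at hUspan hZF ⊢
  eta_reduce at hUspan hZF ⊢
  have hH := isUnit_conjTranspose_mul_self_of_rank_eq (by rwa [Fintype.card_fin])
  obtain ⟨v, rfl⟩ := hT.exists_eq_vecMulVec_star_of_rank_eq_one hTrank
  have hv : ∀ j ≠ k, star (H.col j) ⬝ᵥ v = 0 := fun j hj => by
    simpa [star_dotProduct_vecMulVec_star_mulVec] using hZF j hj
  set c := star (H.col k) ⬝ᵥ v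
  obtain ⟨b, hb⟩ : v - c • pinvCol H k ∈ LinearMap.range Uperp.mulVecLin := by
    rw [range_mulVecLin, ← SetLike.mem_coe, hUspan]
    exact star_col_dotProduct_sub_smul_pinvCol hH hv
  rw [mulVecLin_apply] at hb
  obtain ⟨s, hs, hg⟩ := exists_normalizedPinvCol_eq_inv_smul hH k
  have hva : zfBasisMatrix M K H Uperp k *ᵥ Fin.cons (c * s) b = v := by
    rw [zfBasisMatrix_mulVec_cons, hg, hb, smul_smul, mul_assoc, mul_inv_cancel₀ hs, mul_one,
      add_sub_cancel]
  refine ⟨Fin.cons (c * s) b, by rw [← vecMulVec_mulVec_star, hva], ?_⟩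
  rw [star_dotProduct_vecMulVec_star_mulVec, hg, star_smul_pinvCol_dotProduct_col hH,
    Fin.cons_zero, Complex.normSq_mul, Complex.star_def, Complex.normSq_conj, Complex.normSq_inv,
    mul_comm (Complex.normSq c), inv_mul_cancel_left₀ (Complex.normSq_pos.mpr hs).ne',
    Complex.normSq_eq_conj_mul_self]

/-- **Parametrization of rank-one zero-forcing transmit covariances.** If `T`
is Hermitian positive semidefinite of rank one and `h_jᴴ T h_j = 0` for all
`j ≠ k`, then `T = U_k a aᴴ U_kᴴ` for some vector `a`, and moreover
`h_kᴴ T h_k = |g_kᴴ h_k|² · |a_1|²`. -/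
theorem rank_one_zero_forcing_covariance_parametrization
    (M K : ℕ) (hKM : K ≤ M)
    (H : Matrix (Fin M) (Fin K) ℂ) (hrank : H.rank = K)
    (Uperp : Matrix (Fin M) (Fin (M - K)) ℂ)
    (hUorth : Uperpᴴ * Uperp = 1)
    (hUspan : (↑(Submodule.span ℂ
        (Set.range (fun j : Fin (M - K) => fun i => Uperp i j))) : Set (Fin M → ℂ)) =
      {v | ∀ j : Fin K, star (fun i => H i j) ⬝ᵥ v = 0})
    (k : Fin K)
    (T : Matrix (Fin M) (Fin M) ℂ) (hT : T.PosSemidef) (hTrank : T.rank = 1)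
    (hZF : ∀ j : Fin K, j ≠ k →
      star (fun i => H i j) ⬝ᵥ (T *ᵥ (fun i => H i j)) = 0) :
    ∃ a : Fin (M - K + 1) → ℂ,
      T = zfBasisMatrix M K H Uperp k * vecMulVec a (star a) *
          (zfBasisMatrix M K H Uperp k)ᴴ ∧
      star (fun i => H i k) ⬝ᵥ (T *ᵥ (fun i => H i k)) =
        ((Complex.normSq (star (normalizedPinvCol M K H k) ⬝ᵥ (fun i => H i k)) *
            Complex.normSq (a 0) : ℝ) : ℂ) :=
  rank_one_zero_forcing_covariance_parametrization_general M K H hrank Uperp hUspan k T hT hTrank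
    hZF
end

section
/- Rank-one extraction from the semidefinite relaxation preserves the optimal value: Let u ∈ ℂ^n, let Ψ_1, …, Ψ_L ∈ ℂ^{n×n} be Hermitian positive semidefinite with at least one Ψ_ℓ positive definite, and let η_1, …, η_L > 0. Suppose A* maximizes u^H A u over all Hermitian positive semidefinite A ∈ ℂ^{n×n} with tr(Ψ_ℓ A) ≤ η_ℓ for all ℓ, and suppose a* maximizes Re(u^H a) over all a ∈ ℂ^n with a^H Ψ_ℓ a ≤ η_ℓ for all ℓ. Then |u^H a*|² = u^H A* u. -/
/-!
Any feasible vector `a` yields the feasible rank-one matrix `a aᴴ` of value `|uᴴ a|²`, so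
`|uᴴ a*|² ≤ uᴴ A* u`. Conversely, if `v = uᴴ A* u > 0`, the vector `A* u / √v` is feasible, of
value `√v`, so `√v ≤ Re (uᴴ a*)`. Feasibility rests on `(A u)ᴴ Ψ (A u) ≤ tr (Ψ A) · uᴴ A u` for
positive semidefinite `A = Bᴴ B` and `Ψ`: the left side is `(B u)ᴴ (B Ψ Bᴴ) (B u)`, and
`xᴴ M x ≤ tr M · ‖x‖²` for `M ⪰ 0` is Cauchy–Schwarz applied to the rows of `B` when `M = Bᴴ B`.
-/

open Matrix
open scoped ComplexOrder

namespace Matrix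

variable {m n 𝕜 : Type*} [Fintype m] [Fintype n] [RCLike 𝕜]

open RCLike WithLp

lemma re_star_dotProduct_self (x : n → 𝕜) : re (star x ⬝ᵥ x) = ‖toLp 2 x‖ ^ 2 := by
  rw [dotProduct_comm, ← EuclideanSpace.inner_toLp_toLp, inner_self_eq_norm_sq]

lemma norm_toLp_mulVec_sq_le (B : Matrix m n 𝕜) (x : n → 𝕜) :
    ‖toLp 2 (B *ᵥ x)‖ ^ 2 ≤ re (B * Bᴴ).trace * ‖toLp 2 x‖ ^ 2 := by
  have row (i : m) : ‖(B *ᵥ x) i‖ ^ 2 ≤ ‖toLp 2 (B i)‖ ^ 2 * ‖toLp 2 x‖ ^ 2 := by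
    have hrow : (B *ᵥ x) i = inner 𝕜 (toLp 2 (star (B i))) (toLp 2 x) := by
      rw [EuclideanSpace.inner_toLp_toLp, star_star, dotProduct_comm]; rfl
    have hstar : ‖toLp 2 (star (B i))‖ = ‖toLp 2 (B i)‖ := by
      simp [EuclideanSpace.norm_eq]
    rw [hrow, ← hstar, ← mul_pow]
    exact pow_le_pow_left₀ (norm_nonneg _) (norm_inner_le_norm _ _) 2
  have trace_eq : re (B * Bᴴ).trace = ∑ i, ‖toLp 2 (B i)‖ ^ 2 := by
    simp only [trace, diag, map_sum, ← re_star_dotProduct_self]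
    congr! 2 with i
    exact dotProduct_comm _ _
  rw [EuclideanSpace.norm_sq_eq, trace_eq, Finset.sum_mul]
  exact Finset.sum_le_sum fun i _ => row i

open scoped MatrixOrder in
lemma PosSemidef.re_dotProduct_mulVec_le {M : Matrix n n 𝕜} (hM : M.PosSemidef) (x : n → 𝕜) :
    re (star x ⬝ᵥ M *ᵥ x) ≤ re M.trace * ‖toLp 2 x‖ ^ 2 := by
  classical
  obtain ⟨B, rfl⟩ := CStarAlgebra.nonneg_iff_eq_star_mul_self.mp hM.nonneg
  rw [star_eq_conjTranspose, ← mulVec_mulVec, dotProduct_mulVec, ← star_mulVec,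
    re_star_dotProduct_self, trace_mul_comm]
  exact norm_toLp_mulVec_sq_le B x

open scoped MatrixOrder in
lemma PosSemidef.re_dotProduct_mulVec_mulVec_le {A Ψ : Matrix n n 𝕜} (hA : A.PosSemidef)
    (hΨ : Ψ.PosSemidef) (u : n → 𝕜) :
    re (star (A *ᵥ u) ⬝ᵥ Ψ *ᵥ (A *ᵥ u)) ≤ re (Ψ * A).trace * re (star u ⬝ᵥ A *ᵥ u) := by
  classical
  obtain ⟨B, hB⟩ := CStarAlgebra.nonneg_iff_eq_star_mul_self.mp hA.nonneg
  rw [star_eq_conjTranspose] at hB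
  subst hB
  have hquad : star ((Bᴴ * B) *ᵥ u) ⬝ᵥ Ψ *ᵥ ((Bᴴ * B) *ᵥ u)
      = star (B *ᵥ u) ⬝ᵥ (B * Ψ * Bᴴ) *ᵥ (B *ᵥ u) := by
    simp only [← mulVec_mulVec, star_mulVec, dotProduct_mulVec, vecMul_vecMul,
      conjTranspose_conjTranspose, Matrix.mul_assoc]
  have htrace : (B * Ψ * Bᴴ).trace = (Ψ * (Bᴴ * B)).trace := by
    rw [trace_mul_cycle, trace_mul_comm]
  have hnorm : ‖toLp 2 (B *ᵥ u)‖ ^ 2 = re (star u ⬝ᵥ (Bᴴ * B) *ᵥ u) := by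
    rw [← mulVec_mulVec, dotProduct_mulVec, ← star_mulVec, re_star_dotProduct_self]
  rw [hquad, ← htrace, ← hnorm]
  exact (hΨ.mul_mul_conjTranspose_same B).re_dotProduct_mulVec_le _

end Matrix

section Relaxation

variable {ι n : Type*} [Fintype n] (u : n → ℂ) (Ψ : ι → Matrix n n ℂ) (η : ι → ℝ)

lemma normSq_dotProduct_le_of_relaxation_max {Astar : Matrix n n ℂ}
    (hAmax : ∀ A : Matrix n n ℂ, A.PosSemidef → (∀ ℓ, ((Ψ ℓ) * A).trace.re ≤ η ℓ) →
      (star u ⬝ᵥ (A *ᵥ u)).re ≤ (star u ⬝ᵥ (Astar *ᵥ u)).re)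
    {a : n → ℂ} (ha : ∀ ℓ, (star a ⬝ᵥ ((Ψ ℓ) *ᵥ a)).re ≤ η ℓ) :
    Complex.normSq (star u ⬝ᵥ a) ≤ (star u ⬝ᵥ (Astar *ᵥ u)).re := by
  have hfeas (ℓ : ι) : ((Ψ ℓ) * vecMulVec a (star a)).trace.re ≤ η ℓ := by
    rw [mul_vecMulVec, trace_vecMulVec, dotProduct_comm]
    exact ha ℓ
  have hvalue : star u ⬝ᵥ (vecMulVec a (star a) *ᵥ u) = Complex.normSq (star u ⬝ᵥ a) := by
    rw [vecMulVec_mulVec, dotProduct_smul, star_dotProduct, ← Complex.mul_conj]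
    rfl
  simpa [hvalue] using hAmax _ (posSemidef_vecMulVec_self_star a) hfeas

lemma re_dotProduct_mulVec_le_normSq_of_vector_max (hΨ : ∀ ℓ, (Ψ ℓ).PosSemidef)
    {Astar : Matrix n n ℂ} (hA : Astar.PosSemidef) (hAfeas : ∀ ℓ, ((Ψ ℓ) * Astar).trace.re ≤ η ℓ)
    {astar : n → ℂ} (hamax : ∀ a : n → ℂ, (∀ ℓ, (star a ⬝ᵥ ((Ψ ℓ) *ᵥ a)).re ≤ η ℓ) →
      (star u ⬝ᵥ a).re ≤ (star u ⬝ᵥ astar).re) :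
    (star u ⬝ᵥ (Astar *ᵥ u)).re ≤ Complex.normSq (star u ⬝ᵥ astar) := by
  set v := (star u ⬝ᵥ (Astar *ᵥ u)).re
  have hv0 : 0 ≤ v := hA.re_dotProduct_nonneg u
  rcases hv0.eq_or_lt with hv_zero | hvpos
  · rw [← hv_zero]
    exact Complex.normSq_nonneg _
  set c := √v
  have hc : 0 < c := Real.sqrt_pos.mpr hvpos
  have hcc : c * c = v := Real.mul_self_sqrt hv0
  have hfeas (ℓ : ι) :
      (star (c⁻¹ • (Astar *ᵥ u)) ⬝ᵥ ((Ψ ℓ) *ᵥ (c⁻¹ • (Astar *ᵥ u)))).re ≤ η ℓ := by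
    have hquad : (star (Astar *ᵥ u) ⬝ᵥ (Ψ ℓ) *ᵥ (Astar *ᵥ u)).re ≤ ((Ψ ℓ) * Astar).trace.re * v :=
      hA.re_dotProduct_mulVec_mulVec_le (hΨ ℓ) u
    rw [star_smul, star_trivial, mulVec_smul, smul_dotProduct, dotProduct_smul, Complex.smul_re,
      Complex.smul_re, smul_eq_mul, smul_eq_mul, inv_mul_le_iff₀ hc, inv_mul_le_iff₀ hc]
    calc _ ≤ ((Ψ ℓ) * Astar).trace.re * v := hquad
      _ ≤ η ℓ * v := mul_le_mul_of_nonneg_right (hAfeas ℓ) hv0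
      _ = c * (c * η ℓ) := by rw [← hcc]; ring
  have hvalue : (star u ⬝ᵥ (c⁻¹ • (Astar *ᵥ u))).re = c := by
    rw [dotProduct_smul, Complex.smul_re, smul_eq_mul]
    change c⁻¹ * v = c
    rw [← hcc]
    field_simp
  calc v = c * c := hcc.symm
    _ ≤ (star u ⬝ᵥ astar).re * (star u ⬝ᵥ astar).re :=
      mul_self_le_mul_self hc.le (hvalue ▸ hamax _ hfeas)
    _ ≤ Complex.normSq (star u ⬝ᵥ astar) := Complex.re_sq_le_normSq _

end Relaxation

theorem rank_one_extraction_preserves_value_general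
    (n L : ℕ) (u : Fin n → ℂ)
    (Ψ : Fin L → Matrix (Fin n) (Fin n) ℂ) (hΨ : ∀ ℓ, (Ψ ℓ).PosSemidef)
    (η : Fin L → ℝ)
    (Astar : Matrix (Fin n) (Fin n) ℂ) (hA : Astar.PosSemidef)
    (hAfeas : ∀ ℓ, ((Ψ ℓ) * Astar).trace.re ≤ η ℓ)
    (hAmax : ∀ A : Matrix (Fin n) (Fin n) ℂ, A.PosSemidef →
      (∀ ℓ, ((Ψ ℓ) * A).trace.re ≤ η ℓ) →
      (star u ⬝ᵥ (A *ᵥ u)).re ≤ (star u ⬝ᵥ (Astar *ᵥ u)).re)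
    (astar : Fin n → ℂ)
    (hafeas : ∀ ℓ, (star astar ⬝ᵥ ((Ψ ℓ) *ᵥ astar)).re ≤ η ℓ)
    (hamax : ∀ a : Fin n → ℂ,
      (∀ ℓ, (star a ⬝ᵥ ((Ψ ℓ) *ᵥ a)).re ≤ η ℓ) →
      (star u ⬝ᵥ a).re ≤ (star u ⬝ᵥ astar).re) :
    Complex.normSq (star u ⬝ᵥ astar) = (star u ⬝ᵥ (Astar *ᵥ u)).re :=
  le_antisymm (normSq_dotProduct_le_of_relaxation_max u Ψ η hAmax hafeas)
    (re_dotProduct_mulVec_le_normSq_of_vector_max u Ψ η hΨ hA hAfeas hamax)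

/-- **Rank-one extraction from the semidefinite relaxation preserves the
optimal value.** If `A*` maximizes `uᴴ A u` over Hermitian PSD matrices with
`tr(Ψ_ℓ A) ≤ η_ℓ`, and `a*` maximizes `Re(uᴴ a)` over vectors with
`aᴴ Ψ_ℓ a ≤ η_ℓ`, then `|uᴴ a*|² = uᴴ A* u`. -/
theorem rank_one_extraction_preserves_value
    (n L : ℕ) (u : Fin n → ℂ)
    (Ψ : Fin L → Matrix (Fin n) (Fin n) ℂ) (hΨ : ∀ ℓ, (Ψ ℓ).PosSemidef)
    (hΨpd : ∃ ℓ, (Ψ ℓ).PosDef)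
    (η : Fin L → ℝ) (hη : ∀ ℓ, 0 < η ℓ)
    (Astar : Matrix (Fin n) (Fin n) ℂ) (hA : Astar.PosSemidef)
    (hAfeas : ∀ ℓ, ((Ψ ℓ) * Astar).trace.re ≤ η ℓ)
    (hAmax : ∀ A : Matrix (Fin n) (Fin n) ℂ, A.PosSemidef →
      (∀ ℓ, ((Ψ ℓ) * A).trace.re ≤ η ℓ) →
      (star u ⬝ᵥ (A *ᵥ u)).re ≤ (star u ⬝ᵥ (Astar *ᵥ u)).re)
    (astar : Fin n → ℂ)
    (hafeas : ∀ ℓ, (star astar ⬝ᵥ ((Ψ ℓ) *ᵥ astar)).re ≤ η ℓ)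
    (hamax : ∀ a : Fin n → ℂ,
      (∀ ℓ, (star a ⬝ᵥ ((Ψ ℓ) *ᵥ a)).re ≤ η ℓ) →
      (star u ⬝ᵥ a).re ≤ (star u ⬝ᵥ astar).re) :
    Complex.normSq (star u ⬝ᵥ astar) = (star u ⬝ᵥ (Astar *ᵥ u)).re :=
  rank_one_extraction_preserves_value_general n L u Ψ hΨ η Astar hA hAfeas hAmax astar hafeas hamax
end

section
/- Feasible rank-one rounding without loss (abstract form of Theorem 2): Let u ∈ ℂ^n and let Ψ_1, …, Ψ_L ∈ ℂ^{n×n} be Hermitian positive semidefinite with at least one Ψ_ℓ positive definite. Then for every Hermitian positive semidefinite matrix Ã ∈ ℂ^{n×n} there exists a vector ã ∈ ℂ^n such that ã^H Ψ_ℓ ã ≤ tr(Ψ_ℓ Ã) for every ℓ = 1,…,L, and |u^H ã|² ≥ u^H Ã u. Moreover, such a vector is obtained as a maximizer of Re(u^H a) over { a ∈ ℂ^n : a^H Ψ_ℓ a ≤ tr(Ψ_ℓ Ã) for all ℓ }. -/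
/-! With `t = uᴴ Ã u`, the vector `b = Ã u / √t` has `uᴴ b = √t`, and it is feasible for every
positive semidefinite `Ψ` at once. Indeed, writing `Ã = Bᴴ B` and `y = B u`, the Loewner bound
`(Ã u)(Ã u)ᴴ ≤ t Ã` is the conjugate by `B` of `y yᴴ ≤ ‖y‖² I` (Cauchy–Schwarz), and pairing it
with `Ψ ⪰ 0` under the trace gives `(Ã u)ᴴ Ψ (Ã u) ≤ t tr(Ψ Ã)`. A maximizer `ã` of `Re(uᴴ a)`
then has `|uᴴ ã| ≥ Re(uᴴ ã) ≥ Re(uᴴ b) = √t`. -/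

open Matrix
open scoped ComplexOrder

namespace Matrix

open scoped MatrixOrder InnerProductSpace

variable {𝕜 ι : Type*} [RCLike 𝕜] [Fintype ι]

theorem star_dotProduct_mul_star_dotProduct_le (x y : ι → 𝕜) :
    (star x ⬝ᵥ y) * (star y ⬝ᵥ x) ≤ (star x ⬝ᵥ x) * (star y ⬝ᵥ y) := by
  have hinner (v w : ι → 𝕜) : star v ⬝ᵥ w = ⟪WithLp.toLp 2 v, WithLp.toLp 2 w⟫_𝕜 := by
    rw [EuclideanSpace.inner_toLp_toLp, dotProduct_comm]
  rw [hinner x y, hinner y x, hinner x x, hinner y y, ← inner_conj_symm, RCLike.conj_mul,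
    inner_self_eq_norm_sq_to_K, inner_self_eq_norm_sq_to_K, ← RCLike.ofReal_pow,
    ← RCLike.ofReal_pow, ← RCLike.ofReal_pow, ← RCLike.ofReal_mul, RCLike.ofReal_le_ofReal,
    ← mul_pow, mul_comm]
  exact pow_le_pow_left₀ (norm_nonneg _) (norm_inner_le_norm _ _) 2

theorem vecMulVec_le_smul_one [DecidableEq ι] (y : ι → 𝕜) :
    vecMulVec y (star y) ≤ (star y ⬝ᵥ y) • (1 : Matrix ι ι 𝕜) := by
  rw [le_iff]
  refine .of_dotProduct_mulVec_nonneg ?_ fun w ↦ ?_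
  · refine IsHermitian.sub ?_ (posSemidef_vecMulVec_self_star y).isHermitian
    exact isHermitian_one.smul (star_dotProduct y y).symm
  · rw [sub_mulVec, dotProduct_sub, sub_nonneg, smul_mulVec, one_mulVec, dotProduct_smul,
      smul_eq_mul, vecMulVec_mulVec, dotProduct_smul, MulOpposite.smul_eq_mul_unop,
      MulOpposite.unop_op, mul_comm (star y ⬝ᵥ y)]
    exact star_dotProduct_mul_star_dotProduct_le w y

theorem PosSemidef.vecMulVec_mulVec_le_smul {A : Matrix ι ι 𝕜} (hA : A.PosSemidef) (u : ι → 𝕜) :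
    vecMulVec (A *ᵥ u) (star (A *ᵥ u)) ≤ (star u ⬝ᵥ A *ᵥ u) • A := by
  classical
  obtain ⟨B, rfl⟩ := CStarAlgebra.nonneg_iff_eq_star_mul_self.mp hA.nonneg
  have h := star_left_conjugate_le_conjugate (vecMulVec_le_smul_one (B *ᵥ u)) B
  rw [mul_vecMulVec, vecMulVec_mul, mul_smul_comm, mul_one, smul_mul_assoc] at h
  simpa only [star_eq_conjTranspose, ← mulVec_mulVec, star_mulVec, conjTranspose_conjTranspose,
    ← dotProduct_mulVec, vecMul_mulVec] using h

theorem PosSemidef.trace_mul_le_trace_mul {Ψ M N : Matrix ι ι 𝕜} (hΨ : Ψ.PosSemidef) (hMN : M ≤ N) :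
    (Ψ * M).trace ≤ (Ψ * N).trace := by
  classical
  obtain ⟨C, rfl⟩ := CStarAlgebra.nonneg_iff_eq_star_mul_self.mp hΨ.nonneg
  rw [← sub_nonneg, ← trace_sub, ← mul_sub, mul_assoc, trace_mul_comm]
  exact ((le_iff.mp hMN).mul_mul_conjTranspose_same C).trace_nonneg

theorem trace_mul_vecMulVec_star (Ψ : Matrix ι ι 𝕜) (v : ι → 𝕜) :
    (Ψ * vecMulVec v (star v)).trace = star v ⬝ᵥ Ψ *ᵥ v := by
  rw [mul_vecMulVec, trace_vecMulVec, dotProduct_comm]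

theorem PosSemidef.star_mulVec_dotProduct_le_mul_trace {Ψ A : Matrix ι ι 𝕜} (hΨ : Ψ.PosSemidef)
    (hA : A.PosSemidef) (u : ι → 𝕜) :
    star (A *ᵥ u) ⬝ᵥ Ψ *ᵥ (A *ᵥ u) ≤ (star u ⬝ᵥ A *ᵥ u) * (Ψ * A).trace := by
  rw [← trace_mul_vecMulVec_star, ← smul_eq_mul _ (trace _), ← trace_smul, ← mul_smul_comm]
  exact hΨ.trace_mul_le_trace_mul (hA.vecMulVec_mulVec_le_smul u)

theorem PosSemidef.exists_forall_le_trace_mul_and_star_dotProduct_eq_sqrt {A : Matrix ι ι 𝕜}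
    (hA : A.PosSemidef) (u : ι → 𝕜) :
    ∃ b : ι → 𝕜, (∀ Ψ : Matrix ι ι 𝕜, Ψ.PosSemidef → star b ⬝ᵥ Ψ *ᵥ b ≤ (Ψ * A).trace) ∧
      star u ⬝ᵥ b = √(RCLike.re (star u ⬝ᵥ A *ᵥ u)) := by
  obtain ⟨t, ht0, ht⟩ := RCLike.nonneg_iff_exists_ofReal.mp (hA.dotProduct_mulVec_nonneg u)
  rw [← ht, RCLike.ofReal_re]
  set s : ℝ := (√t)⁻¹ with hs
  -- for `t = 0` the junk value `(√0)⁻¹ = 0` makes `b = 0`, which is still feasible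
  refine ⟨(s : 𝕜) • A *ᵥ u, fun Ψ hΨ ↦ ?_, ?_⟩
  · have hscale : ((s ^ 2 * t : ℝ) : 𝕜) ≤ 1 := by
      rw [hs, inv_pow, Real.sq_sqrt ht0, ← RCLike.ofReal_one, RCLike.ofReal_le_ofReal]
      exact inv_mul_le_one
    have htrace : 0 ≤ (Ψ * A).trace := by
      simpa using hΨ.trace_mul_le_trace_mul hA.nonneg
    calc star ((s : 𝕜) • A *ᵥ u) ⬝ᵥ Ψ *ᵥ ((s : 𝕜) • A *ᵥ u)
        = ((s ^ 2 : ℝ) : 𝕜) * (star (A *ᵥ u) ⬝ᵥ Ψ *ᵥ (A *ᵥ u)) := by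
          rw [star_smul, RCLike.star_def, RCLike.conj_ofReal, mulVec_smul, dotProduct_smul,
            smul_dotProduct, smul_eq_mul, smul_eq_mul, ← mul_assoc, ← RCLike.ofReal_mul, sq]
      _ ≤ ((s ^ 2 : ℝ) : 𝕜) * ((t : 𝕜) * (Ψ * A).trace) := by
          refine mul_le_mul_of_nonneg_left ?_ (by exact_mod_cast sq_nonneg s)
          exact ht ▸ hΨ.star_mulVec_dotProduct_le_mul_trace hA u
      _ ≤ (Ψ * A).trace := by
          rw [← mul_assoc, ← RCLike.ofReal_mul]
          exact mul_le_of_le_one_left htrace hscale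
  · rw [dotProduct_smul, ← ht, smul_eq_mul, ← RCLike.ofReal_mul, hs, inv_mul_eq_div,
      Real.div_sqrt]

end Matrix

theorem Complex.le_normSq_of_sqrt_le_re {t : ℝ} {z : ℂ} (ht : 0 ≤ t) (h : √t ≤ z.re) :
    t ≤ Complex.normSq z := by
  calc t = √t * √t := (Real.mul_self_sqrt ht).symm
    _ ≤ z.re * z.re := mul_self_le_mul_self (Real.sqrt_nonneg t) h
    _ ≤ Complex.normSq z := Complex.re_sq_le_normSq z

theorem feasible_rank_one_rounding_general
    (n L : ℕ) (u : Fin n → ℂ)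
    (Ψ : Fin L → Matrix (Fin n) (Fin n) ℂ) (hΨ : ∀ ℓ, (Ψ ℓ).PosSemidef)
    (Atil : Matrix (Fin n) (Fin n) ℂ) (hA : Atil.PosSemidef) :
    (∃ atil : Fin n → ℂ,
      (∀ ℓ, (star atil ⬝ᵥ ((Ψ ℓ) *ᵥ atil)).re ≤ ((Ψ ℓ) * Atil).trace.re) ∧
      Complex.normSq (star u ⬝ᵥ atil) ≥ (star u ⬝ᵥ (Atil *ᵥ u)).re) ∧
    (∀ atil : Fin n → ℂ,
      (∀ ℓ, (star atil ⬝ᵥ ((Ψ ℓ) *ᵥ atil)).re ≤ ((Ψ ℓ) * Atil).trace.re) →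
      (∀ a : Fin n → ℂ,
        (∀ ℓ, (star a ⬝ᵥ ((Ψ ℓ) *ᵥ a)).re ≤ ((Ψ ℓ) * Atil).trace.re) →
        (star u ⬝ᵥ a).re ≤ (star u ⬝ᵥ atil).re) →
      Complex.normSq (star u ⬝ᵥ atil) ≥ (star u ⬝ᵥ (Atil *ᵥ u)).re) := by
  obtain ⟨b, hb_feasible, hb_dot⟩ :=
    hA.exists_forall_le_trace_mul_and_star_dotProduct_eq_sqrt u
  have ht : 0 ≤ (star u ⬝ᵥ (Atil *ᵥ u)).re := (Complex.le_def.mp (hA.dotProduct_mulVec_nonneg u)).1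
  have hb : ∀ ℓ, (star b ⬝ᵥ ((Ψ ℓ) *ᵥ b)).re ≤ ((Ψ ℓ) * Atil).trace.re := fun ℓ ↦
    (Complex.le_def.mp (hb_feasible _ (hΨ ℓ))).1
  have hb_re : (star u ⬝ᵥ b).re = √(star u ⬝ᵥ (Atil *ᵥ u)).re := by
    simpa using congrArg Complex.re hb_dot
  refine ⟨⟨b, hb, Complex.le_normSq_of_sqrt_le_re ht hb_re.ge⟩, fun atil _ hmax ↦ ?_⟩
  exact Complex.le_normSq_of_sqrt_le_re ht (hb_re ▸ hmax b hb)

/-- **Feasible rank-one rounding without loss (abstract form of Theorem 2).**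
For every Hermitian PSD matrix `Ã` there is a vector `ã` with
`ãᴴ Ψ_ℓ ã ≤ tr(Ψ_ℓ Ã)` for every `ℓ` and `|uᴴ ã|² ≥ uᴴ Ã u`; moreover, any
maximizer of `Re(uᴴ a)` over `{a : aᴴ Ψ_ℓ a ≤ tr(Ψ_ℓ Ã) ∀ℓ}` is such a
vector. -/
theorem feasible_rank_one_rounding
    (n L : ℕ) (u : Fin n → ℂ)
    (Ψ : Fin L → Matrix (Fin n) (Fin n) ℂ) (hΨ : ∀ ℓ, (Ψ ℓ).PosSemidef)
    (hΨpd : ∃ ℓ, (Ψ ℓ).PosDef)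
    (Atil : Matrix (Fin n) (Fin n) ℂ) (hA : Atil.PosSemidef) :
    (∃ atil : Fin n → ℂ,
      (∀ ℓ, (star atil ⬝ᵥ ((Ψ ℓ) *ᵥ atil)).re ≤ ((Ψ ℓ) * Atil).trace.re) ∧
      Complex.normSq (star u ⬝ᵥ atil) ≥ (star u ⬝ᵥ (Atil *ᵥ u)).re) ∧
    (∀ atil : Fin n → ℂ,
      (∀ ℓ, (star atil ⬝ᵥ ((Ψ ℓ) *ᵥ atil)).re ≤ ((Ψ ℓ) * Atil).trace.re) →
      (∀ a : Fin n → ℂ,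
        (∀ ℓ, (star a ⬝ᵥ ((Ψ ℓ) *ᵥ a)).re ≤ ((Ψ ℓ) * Atil).trace.re) →
        (star u ⬝ᵥ a).re ≤ (star u ⬝ᵥ atil).re) →
      Complex.normSq (star u ⬝ᵥ atil) ≥ (star u ⬝ᵥ (Atil *ᵥ u)).re) :=
  feasible_rank_one_rounding_general n L u Ψ hΨ Atil hA
end
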